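/- arXiv:2012.06093 — 3 statements merged into one kernel-verified Lean document; each statement's English description precedes it below -/
import Mathlib

section
/- Bias formula for pairwise average treatment effects with multiple treatments (Theorem 1): for any two distinct treatments j, k ∈ J, the naive conditional contrast minus the true average treatment effect satisfies (E[Yobs | A = j] − E[Yobs | A = k]) − E[Y j − Y k] = −p(j)·c(k, j) + p(k)·c(j, k) − Σ_{l ∈ J, l ≠ j, l ≠ k} p(l)·(c(k, l) − c(j, l)). -/
open MeasureTheory ProbabilityTheory

noncomputable section

variable {Ω J : Type*}

/-- `condMean μ A Z j` is `E[Z | A = j]`, the mean of `Z` under the conditional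
measure `μ[|{A = j}]`. -/
def condMean [MeasurableSpace Ω] (μ : Measure Ω) (A : Ω → J) (Z : Ω → ℝ) (j : J) : ℝ :=
  ∫ ω, Z ω ∂(μ[|{ω | A ω = j}])

/-- `treatProb μ A j` is `p(j) = μ{ω : A ω = j}`. -/
def treatProb [MeasurableSpace Ω] (μ : Measure Ω) (A : Ω → J) (j : J) : ℝ :=
  (μ {ω | A ω = j}).toReal

/-- The confounding function `c(j,k) = E[Y j | A = j] - E[Y j | A = k]`. -/
def confFun [MeasurableSpace Ω] (μ : Measure Ω) (A : Ω → J) (Y : J → Ω → ℝ) (j k : J) : ℝ :=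
  condMean μ A (Y j) j - condMean μ A (Y j) k

lemma condMean_mul [MeasurableSpace Ω] (μ : Measure Ω) [IsProbabilityMeasure μ]
    (A : Ω → J) (Z : Ω → ℝ) (l : J) (hne : μ {ω | A ω = l} ≠ 0) :
    treatProb μ A l * condMean μ A Z l = ∫ ω in {ω | A ω = l}, Z ω ∂μ := by
  rw [condMean, ProbabilityTheory.cond, integral_smul_measure, smul_eq_mul, treatProb,
    ENNReal.toReal_inv, ← mul_assoc, mul_inv_cancel₀, one_mul]
  exact ENNReal.toReal_ne_zero.2 ⟨hne, measure_ne_top μ _⟩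

lemma total [MeasurableSpace Ω] (μ : Measure Ω) [IsProbabilityMeasure μ]
    [Fintype J] [MeasurableSpace J] [MeasurableSingletonClass J]
    (A : Ω → J) (hA : Measurable A) (Z : Ω → ℝ) (hZ : Integrable Z μ)
    (hne : ∀ l, μ {ω | A ω = l} ≠ 0) :
    ∫ ω, Z ω ∂μ = ∑ l, treatProb μ A l * condMean μ A Z l := by
  have hmeas : ∀ l : J, MeasurableSet {ω | A ω = l} := fun l =>
    hA (measurableSet_singleton l)
  have hU : (⋃ l : J, {ω | A ω = l}) = Set.univ := by
    ext ω; simp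
  have hd : Pairwise (Function.onFun Disjoint fun l : J => {ω | A ω = l}) := by
    intro a b hab
    simp only [Function.onFun, Set.disjoint_left]
    rintro ω (rfl : A ω = a) (rfl : A ω = b)
    exact hab rfl
  calc ∫ ω, Z ω ∂μ = ∫ ω in ⋃ l : J, {ω | A ω = l}, Z ω ∂μ := by
        rw [hU, Measure.restrict_univ]
    _ = ∑' l : J, ∫ ω in {ω | A ω = l}, Z ω ∂μ :=
        integral_iUnion hmeas hd (hU ▸ hZ.integrableOn)
    _ = ∑ l, ∫ ω in {ω | A ω = l}, Z ω ∂μ := tsum_fintype _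
    _ = ∑ l, treatProb μ A l * condMean μ A Z l := by
        exact Finset.sum_congr rfl fun l _ => (condMean_mul μ A Z l (hne l)).symm

theorem bias_formula_multiple_treatments
    [MeasurableSpace Ω] (μ : Measure Ω) [IsProbabilityMeasure μ]
    [Fintype J] [Nonempty J] [DecidableEq J] [MeasurableSpace J] [MeasurableSingletonClass J]
    (A : Ω → J) (hA : Measurable A)
    (Y : J → Ω → ℝ) (hY : ∀ j, Integrable (Y j) μ)
    (hp : ∀ j, 0 < treatProb μ A j)
    (j k : J) (hjk : j ≠ k) :
    (condMean μ A (fun ω => Y (A ω) ω) j - condMean μ A (fun ω => Y (A ω) ω) k)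
        - ∫ ω, (Y j ω - Y k ω) ∂μ
      = -(treatProb μ A j) * confFun μ A Y k j + treatProb μ A k * confFun μ A Y j k
        - ∑ l ∈ Finset.univ.filter (fun l => l ≠ j ∧ l ≠ k),
            treatProb μ A l * (confFun μ A Y k l - confFun μ A Y j l) := by
  have hne : ∀ l, μ {ω | A ω = l} ≠ 0 := fun l => by
    intro h
    have := hp l
    rw [treatProb, h] at this
    simp at this
  -- Yobs conditional means
  have hobs : ∀ l : J, condMean μ A (fun ω => Y (A ω) ω) l = condMean μ A (Y l) l := by
    intro l
    unfold condMean
    refine integral_congr_ae ?_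
    rw [ProbabilityTheory.cond]
    refine Measure.ae_smul_measure ?_ _
    filter_upwards [ae_restrict_mem (hA (measurableSet_singleton l))] with ω hω
    rw [show A ω = l from hω]
  have hint : ∫ ω, (Y j ω - Y k ω) ∂μ = ∫ ω, Y j ω ∂μ - ∫ ω, Y k ω ∂μ :=
    integral_sub (hY j) (hY k)
  have hj := total μ A hA (Y j) (hY j) hne
  have hk := total μ A hA (Y k) (hY k) hne
  have hsum1 : ∑ l, treatProb μ A l = 1 := by
    unfold treatProb
    rw [← ENNReal.toReal_sum (fun l _ => measure_ne_top μ _)]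
    have : ∑ l : J, μ {ω | A ω = l} = μ Set.univ := by
      rw [← MeasureTheory.measure_biUnion_finset]
      · congr 1; ext ω; simp
      · intro a _ b _ hab
        simp only [Function.onFun, Set.disjoint_left]
        rintro ω (rfl : A ω = a) (rfl : A ω = b)
        exact hab rfl
      · exact fun b _ => hA (measurableSet_singleton b)
    rw [this, measure_univ, ENNReal.toReal_one]
  -- split sums over univ
  have hsplit : ∀ f : J → ℝ, ∑ l, f l
      = f j + f k + ∑ l ∈ Finset.univ.filter (fun l => l ≠ j ∧ l ≠ k), f l := by
    intro f
    have h1 : Finset.univ.filter (fun l : J => l ≠ j ∧ l ≠ k)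
        = (Finset.univ.erase j).erase k := by
      ext l; simp [Finset.mem_erase, and_comm]
    rw [h1, add_assoc, Finset.add_sum_erase _ f (Finset.mem_erase.2 ⟨hjk.symm, Finset.mem_univ k⟩),
      Finset.add_sum_erase _ f (Finset.mem_univ j)]
  rw [hobs j, hobs k, hint, hj, hk, hsplit (fun l => treatProb μ A l * condMean μ A (Y j) l),
    hsplit (fun l => treatProb μ A l * condMean μ A (Y k) l)]
  have hsplit1 := hsplit (fun l => treatProb μ A l)
  rw [hsum1] at hsplit1
  simp only [confFun]
  have hsum2 : ∑ l ∈ Finset.univ.filter (fun l : J => l ≠ j ∧ l ≠ k),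
        treatProb μ A l * ((condMean μ A (Y k) k - condMean μ A (Y k) l)
          - (condMean μ A (Y j) j - condMean μ A (Y j) l))
      = (condMean μ A (Y k) k - condMean μ A (Y j) j)
          * (∑ l ∈ Finset.univ.filter (fun l : J => l ≠ j ∧ l ≠ k), treatProb μ A l)
        - ∑ l ∈ Finset.univ.filter (fun l : J => l ≠ j ∧ l ≠ k),
            treatProb μ A l * condMean μ A (Y k) l
        + ∑ l ∈ Finset.univ.filter (fun l : J => l ≠ j ∧ l ≠ k),
            treatProb μ A l * condMean μ A (Y j) l := by
    rw [Finset.mul_sum, ← Finset.sum_sub_distrib, ← Finset.sum_add_distrib]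
    exact Finset.sum_congr rfl fun l _ => by ring
  rw [hsum2]
  linear_combination (condMean μ A (Y j) j - condMean μ A (Y k) k) * hsplit1


end
end

section
/- Confounding-function-adjusted outcomes remove the bias (Theorem 2): define the adjusted outcome Ycf ω := Yobs ω − Σ_{l ∈ J, l ≠ A ω} p(l)·c(A ω, l). Then for any two distinct treatments j, k ∈ J, E[Ycf | A = j] − E[Ycf | A = k] = E[Y j − Y k]; that is, the estimand based on the adjusted outcomes equals the true average treatment effect. -/
open MeasureTheory ProbabilityTheory

noncomputable section

variable {Ω J : Type*}

/-- The confounding-function-adjusted outcome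
`Ycf ω = Yobs ω - ∑_{l ≠ A ω} p(l) · c(A ω, l)`. -/
def adjOutcome [MeasurableSpace Ω] [Fintype J] [DecidableEq J]
    (μ : Measure Ω) (A : Ω → J) (Y : J → Ω → ℝ) (ω : Ω) : ℝ :=
  Y (A ω) ω -
    ∑ l ∈ Finset.univ.filter (fun l => l ≠ A ω), treatProb μ A l * confFun μ A Y (A ω) l

/-! On the event `{A = i}` the adjusted outcome is `Y i` shifted by the constant
`Cᵢ = ∑_{l ≠ i} p(l) c(i, l)`, and since `c(i, i) = 0` the sum may run over all `l`.
By the law of total expectation `∑_l p(l) E[Y i | A = l] = E[Y i]`, so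
`Cᵢ = E[Y i | A = i] - E[Y i]` and therefore `E[Ycf | A = i] = E[Y i]` for every arm `i`. -/

section

variable [MeasurableSpace Ω] {μ : Measure Ω} {A : Ω → J} {Y : J → Ω → ℝ}

-- No positivity is needed: if `p(j) = 0` then `μ[|{A = j}] = 0` and both sides vanish.
lemma treatProb_mul_condMean [IsFiniteMeasure μ] (Z : Ω → ℝ) (j : J) :
    treatProb μ A j * condMean μ A Z j = ∫ ω in {ω | A ω = j}, Z ω ∂μ := by
  rw [condMean, ProbabilityTheory.cond, integral_smul_measure, treatProb, smul_eq_mul,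
    ← mul_assoc, ENNReal.toReal_inv]
  by_cases hj : μ {ω | A ω = j} = 0
  · simp [Measure.restrict_eq_zero.2 hj]
  · rw [mul_inv_cancel₀ (ENNReal.toReal_ne_zero.2 ⟨hj, measure_ne_top _ _⟩), one_mul]

lemma condMean_congr {j : J} (hA : MeasurableSet {ω | A ω = j}) {Z Z' : Ω → ℝ}
    (h : ∀ ω, A ω = j → Z ω = Z' ω) : condMean μ A Z j = condMean μ A Z' j :=
  integral_congr_ae (ae_cond_of_forall_mem hA h)

lemma condMean_sub_const [IsFiniteMeasure μ] {Z : Ω → ℝ} (hZ : Integrable Z μ) {j : J}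
    (hj : 0 < treatProb μ A j) (c : ℝ) :
    condMean μ A (fun ω => Z ω - c) j = condMean μ A Z j - c := by
  refine mul_left_cancel₀ hj.ne' ?_
  rw [treatProb_mul_condMean, mul_sub, treatProb_mul_condMean,
    integral_sub hZ.integrableOn (integrableOn_const (measure_ne_top _ _)), setIntegral_const,
    smul_eq_mul, measureReal_def, treatProb]

lemma confFun_self (j : J) : confFun μ A Y j j = 0 :=
  sub_self _

lemma adjOutcome_of_eq [Fintype J] [DecidableEq J] {ω : Ω} {i : J} (h : A ω = i) :
    adjOutcome μ A Y ω = Y i ω - ∑ l, treatProb μ A l * confFun μ A Y i l := by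
  subst h
  rw [adjOutcome, Finset.sum_filter_of_ne]
  rintro l - hl rfl
  simp [confFun_self] at hl

variable [Fintype J] [MeasurableSpace J] [MeasurableSingletonClass J]

lemma sum_treatProb [IsProbabilityMeasure μ] (hA : Measurable A) :
    ∑ j, treatProb μ A j = 1 :=
  calc ∑ j, treatProb μ A j = μ.real (A ⁻¹' (Finset.univ : Finset J)) :=
        sum_measureReal_preimage_singleton _ fun j _ => hA (measurableSet_singleton j)
    _ = 1 := by simp

lemma integral_eq_sum_treatProb_mul_condMean [IsFiniteMeasure μ] (hA : Measurable A)
    {Z : Ω → ℝ} (hZ : Integrable Z μ) :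
    ∫ ω, Z ω ∂μ = ∑ j, treatProb μ A j * condMean μ A Z j := by
  simp_rw [treatProb_mul_condMean]
  calc ∫ ω, Z ω ∂μ = ∫ ω in ⋃ j, {ω | A ω = j}, Z ω ∂μ := by
        rw [Set.iUnion_eq_univ_iff.2 fun ω => ⟨A ω, rfl⟩, setIntegral_univ]
    _ = _ := integral_iUnion_fintype (fun j => hA (measurableSet_singleton j))
        (fun i j hij => Set.disjoint_left.2 fun ω hi hj => hij (hi.symm.trans hj))
        fun _ => hZ.integrableOn

lemma sum_treatProb_mul_confFun [IsProbabilityMeasure μ] (hA : Measurable A) {i : J}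
    (hY : Integrable (Y i) μ) :
    ∑ l, treatProb μ A l * confFun μ A Y i l =
      condMean μ A (Y i) i - ∫ ω, Y i ω ∂μ := by
  simp only [confFun, mul_sub, Finset.sum_sub_distrib, ← Finset.sum_mul, sum_treatProb hA,
    one_mul, ← integral_eq_sum_treatProb_mul_condMean hA hY]

theorem condMean_adjOutcome [IsProbabilityMeasure μ] [DecidableEq J] (hA : Measurable A)
    {i : J} (hY : Integrable (Y i) μ) (hi : 0 < treatProb μ A i) :
    condMean μ A (adjOutcome μ A Y) i = ∫ ω, Y i ω ∂μ := by
  rw [condMean_congr (hA (measurableSet_singleton i)) fun ω => adjOutcome_of_eq,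
    condMean_sub_const hY hi, sum_treatProb_mul_confFun hA hY, sub_sub_cancel]

end

theorem adjusted_outcome_removes_bias_general
    [MeasurableSpace Ω] (μ : Measure Ω) [IsProbabilityMeasure μ]
    [Fintype J] [DecidableEq J] [MeasurableSpace J] [MeasurableSingletonClass J]
    (A : Ω → J) (hA : Measurable A)
    (Y : J → Ω → ℝ) (hY : ∀ j, Integrable (Y j) μ)
    (hp : ∀ j, 0 < treatProb μ A j)
    (j k : J) :
    condMean μ A (adjOutcome μ A Y) j - condMean μ A (adjOutcome μ A Y) k
      = ∫ ω, (Y j ω - Y k ω) ∂μ := by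
  rw [condMean_adjOutcome hA (hY j) (hp j), condMean_adjOutcome hA (hY k) (hp k),
    integral_sub (hY j) (hY k)]

theorem adjusted_outcome_removes_bias
    [MeasurableSpace Ω] (μ : Measure Ω) [IsProbabilityMeasure μ]
    [Fintype J] [Nonempty J] [DecidableEq J] [MeasurableSpace J] [MeasurableSingletonClass J]
    (A : Ω → J) (hA : Measurable A)
    (Y : J → Ω → ℝ) (hY : ∀ j, Integrable (Y j) μ)
    (hp : ∀ j, 0 < treatProb μ A j)
    (j k : J) (hjk : j ≠ k) :
    condMean μ A (adjOutcome μ A Y) j - condMean μ A (adjOutcome μ A Y) k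
      = ∫ ω, (Y j ω - Y k ω) ∂μ :=
  adjusted_outcome_removes_bias_general μ A hA Y hY hp j k

end
end

section
/- Second intermediate identity in the proof of Theorem 1: for distinct treatments j, k ∈ J, p(k)·E[Y j − Y k | A = k] = (1 − p(j))·(E[Yobs | A = j] − E[Yobs | A = k]) − p(k)·c(j, k) − (1 − p(j) − p(k))·(E[Y j | A = j] − E[Y k | A = k]). -/
open MeasureTheory ProbabilityTheory

noncomputable section

variable {Ω J : Type*}

theorem bias_proof_intermediate_identity_two
    [MeasurableSpace Ω] (μ : Measure Ω) [IsProbabilityMeasure μ]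
    [Fintype J] [Nonempty J] [DecidableEq J] [MeasurableSpace J] [MeasurableSingletonClass J]
    (A : Ω → J) (hA : Measurable A)
    (Y : J → Ω → ℝ) (hY : ∀ j, Integrable (Y j) μ)
    (hp : ∀ j, 0 < treatProb μ A j)
    (j k : J) (hjk : j ≠ k) :
    treatProb μ A k * condMean μ A (fun ω => Y j ω - Y k ω) k
      = (1 - treatProb μ A j) *
          (condMean μ A (fun ω => Y (A ω) ω) j - condMean μ A (fun ω => Y (A ω) ω) k)
        - treatProb μ A k * confFun μ A Y j k
        - (1 - treatProb μ A j - treatProb μ A k) *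
            (condMean μ A (Y j) j - condMean μ A (Y k) k) := by
  have hne : ∀ i : J, μ {ω | A ω = i} ≠ 0 := by
    intro i h
    have := hp i
    simp [treatProb, h] at this
  have hInt : ∀ (Z : Ω → ℝ), Integrable Z μ → ∀ i : J,
      Integrable Z (μ[|{ω | A ω = i}]) := by
    intro Z hZ i
    rw [ProbabilityTheory.cond]
    exact (hZ.restrict.smul_measure (by simp [hne i]))
  have hobs : ∀ i : J, condMean μ A (fun ω => Y (A ω) ω) i = condMean μ A (Y i) i := by
    intro i
    unfold condMean
    rw [ProbabilityTheory.cond, integral_smul_measure, integral_smul_measure]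
    congr 1
    refine setIntegral_congr_fun (hA (measurableSet_singleton i)) ?_
    intro ω hω
    simp only [Set.mem_setOf_eq] at hω
    show Y (A ω) ω = Y i ω; rw [hω]
  have hsub : condMean μ A (fun ω => Y j ω - Y k ω) k
      = condMean μ A (Y j) k - condMean μ A (Y k) k := by
    unfold condMean
    exact integral_sub (hInt _ (hY j) k) (hInt _ (hY k) k)
  rw [hobs j, hobs k, hsub, confFun]
  ring

end
end
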